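/- arXiv:1103.3605 — 6 statements merged into one kernel-verified Lean document; each statement's English description precedes it below -/
import Mathlib

section
/- Let T ≥ 1, let H = {x : {0,...,T+1} → ℝ : x(0)=x(T+1)=0} with norm ‖x‖ = (∑_{k=1}^{T+1}|Δx(k−1)|²)^{1/2}, and let c₂ be the discrete Poincaré constant. Suppose f : {1,...,T} × ℝ → ℝ is continuous and there exist α < 1/(2c₂), β ∈ ℝ, and γ : {1,...,T} → ℝ with f(k,s) ≥ −α s² + β s + γ(k) for all k, s. Then the functional x ↦ ∑_{k=1}^{T+1} |Δx(k−1)|²/2 + ∑_{k=1}^{T} f(k, x(k)) is coercive on H and attains its minimum. -/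
/-!
By the Poincaré inequality the term `-α x(k)²` costs at most `max α 0 * c₂ * ‖x‖²`, and by
Cauchy–Schwarz the linear term costs at most `|β| √(T c₂) ‖x‖`. Hence `Φ x` is bounded below by a
quadratic in `‖x‖` with leading coefficient `1/2 - max α 0 * c₂ > 0`, which gives coercivity.
For the minimum, `H` is closed in the product topology on `ℕ → ℝ`, and by the Poincaré inequality
again, the points of `H` with `Φ x < Φ 0` lie in a box `∏ₖ [-r, r]`, which is compact.
-/

open Finset Filter

def dirichletSpace (T : ℕ) : Set (ℕ → ℝ) := {x | x 0 = 0 ∧ ∀ k, T + 1 ≤ k → x k = 0}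

lemma isClosed_dirichletSpace (T : ℕ) : IsClosed (dirichletSpace T) := by
  rw [dirichletSpace, Set.ofPred_and, Set.ofPred_forall]
  refine (isClosed_eq (continuous_apply 0) continuous_const).inter (isClosed_iInter fun k => ?_)
  rw [Set.ofPred_forall]
  exact isClosed_iInter fun _ => isClosed_eq (continuous_apply k) continuous_const

lemma eq_zero_of_mem_dirichletSpace {T : ℕ} {x : ℕ → ℝ} (hx : x ∈ dirichletSpace T) :
    ∀ k ∉ Icc 1 T, x k = 0 := fun k hk => by
  rw [mem_Icc, not_and_or, not_le, not_le, Nat.lt_one_iff] at hk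
  rcases hk with rfl | hk
  exacts [hx.1, hx.2 k hk]

lemma abs_le_sqrt_sum_sq_of_eq_zero {ι : Type*} {s : Finset ι} {x : ι → ℝ}
    (hx : ∀ i ∉ s, x i = 0) (i : ι) : |x i| ≤ √(∑ j ∈ s, x j ^ 2) := by
  apply Real.abs_le_sqrt
  by_cases hi : i ∈ s
  · exact single_le_sum (fun j _ => sq_nonneg (x j)) hi
  · rw [hx i hi, sq, zero_mul]
    exact sum_nonneg fun j _ => sq_nonneg (x j)

lemma abs_apply_le_of_mem_dirichletSpace {T : ℕ} {x : ℕ → ℝ} (hx : x ∈ dirichletSpace T)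
    {c t : ℝ} (hc : 0 ≤ c) (ht : 0 ≤ t) (hsq : ∑ k ∈ Icc 1 T, x k ^ 2 ≤ c * t ^ 2) (k : ℕ) :
    |x k| ≤ √c * t :=
  calc |x k| ≤ √(∑ j ∈ Icc 1 T, x j ^ 2) :=
        abs_le_sqrt_sum_sq_of_eq_zero (eq_zero_of_mem_dirichletSpace hx) k
    _ ≤ √(c * t ^ 2) := Real.sqrt_le_sqrt hsq
    _ = √c * t := by rw [Real.sqrt_mul hc, Real.sqrt_sq ht]

lemma le_sum_quadratic_of_sum_sq_le {ι : Type*} (s : Finset ι) (x γ : ι → ℝ) (α β : ℝ)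
    {c t : ℝ} (hc : 0 ≤ c) (ht : 0 ≤ t) (hx : ∑ i ∈ s, x i ^ 2 ≤ c * t ^ 2) :
    -(max α 0 * c) * t ^ 2 - |β| * √(#s * c) * t + ∑ i ∈ s, γ i ≤
      ∑ i ∈ s, (-α * x i ^ 2 + β * x i + γ i) := by
  have hsplit : ∑ i ∈ s, (-α * x i ^ 2 + β * x i + γ i) =
      -α * ∑ i ∈ s, x i ^ 2 + β * ∑ i ∈ s, x i + ∑ i ∈ s, γ i := by
    rw [sum_add_distrib, sum_add_distrib, ← mul_sum, ← mul_sum]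
  have hquad : α * ∑ i ∈ s, x i ^ 2 ≤ max α 0 * c * t ^ 2 := by
    rw [mul_assoc]
    exact mul_le_mul (le_max_left _ _) hx (sum_nonneg fun i _ => sq_nonneg _) (le_max_right _ _)
  have hlin : |β * ∑ i ∈ s, x i| ≤ |β| * √(#s * c) * t :=
    calc |β * ∑ i ∈ s, x i| ≤ |β| * √(#s * (c * t ^ 2)) := by
          rw [abs_mul]
          gcongr
          exact (Real.abs_le_sqrt sq_sum_le_card_mul_sum_sq).trans (by gcongr)
      _ = |β| * √(#s * c) * t := by
          rw [← mul_assoc, Real.sqrt_mul (by positivity), Real.sqrt_sq ht, mul_assoc]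
  rw [hsplit]
  linarith [neg_abs_le (β * ∑ i ∈ s, x i)]

lemma exists_forall_lt_quadratic {a : ℝ} (ha : 0 < a) (b c M : ℝ) :
    ∃ R, ∀ t, R < t → M < a * t ^ 2 - b * t + c := by
  refine ⟨max 1 ((|M - c| + |b|) / a), fun t ht => ?_⟩
  have ht1 : 1 < t := (le_max_left _ _).trans_lt ht
  have hat : |M - c| + |b| < a * t := by
    rw [← div_lt_iff₀' ha]
    exact (le_max_right _ _).trans_lt ht
  nlinarith [le_abs_self (M - c), le_abs_self b, abs_nonneg (M - c), abs_nonneg b]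

lemma ContinuousOn.exists_isMinOn_of_lt_subset {X α : Type*} [TopologicalSpace X]
    [LinearOrder α] [TopologicalSpace α] [ClosedIicTopology α] {f : X → α} {s K : Set X}
    (hf : ContinuousOn f s) (hs : IsClosed s) (hK : IsCompact K) {x₀ : X} (h₀ : x₀ ∈ s)
    (hsub : ∀ x ∈ s, f x < f x₀ → x ∈ K) : ∃ x ∈ s, IsMinOn f s x :=
  hf.exists_isMinOn' hs h₀ <| (hasBasis_cocompact.inf_principal s).eventually_iff.2
    ⟨K, hK, fun x ⟨hxK, hxs⟩ => not_lt.1 fun hlt => hxK (hsub x hxs hlt)⟩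

theorem stmt_5_general (T : ℕ)
    (S : Set (ℕ → ℝ))
    (hS : S = {x : ℕ → ℝ | x 0 = 0 ∧ ∀ k, T + 1 ≤ k → x k = 0})
    (N : (ℕ → ℝ) → ℝ)
    (hN : ∀ x, N x = Real.sqrt (∑ k ∈ Finset.Icc 1 (T + 1), (x k - x (k - 1)) ^ 2))
    (c₂ : ℝ) (hc₂pos : 0 < c₂)
    (hc₂ : ∀ x ∈ S, ∑ k ∈ Finset.Icc 1 T, (x k) ^ 2 ≤
      c₂ * ∑ k ∈ Finset.Icc 1 (T + 1), (x k - x (k - 1)) ^ 2)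
    (f : ℕ → ℝ → ℝ) (hf : ∀ k, Continuous (f k))
    (α β : ℝ) (γ : ℕ → ℝ) (hα : α < 1 / (2 * c₂))
    (hbound : ∀ k ∈ Finset.Icc 1 T, ∀ s : ℝ, -α * s ^ 2 + β * s + γ k ≤ f k s)
    (Φ : (ℕ → ℝ) → ℝ)
    (hΦ : ∀ x, Φ x = (∑ k ∈ Finset.Icc 1 (T + 1), (x k - x (k - 1)) ^ 2 / 2) +
      ∑ k ∈ Finset.Icc 1 T, f k (x k)) :
    (∀ M : ℝ, ∃ R : ℝ, ∀ x ∈ S, R < N x → M < Φ x) ∧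
    (∃ x₀ ∈ S, ∀ x ∈ S, Φ x₀ ≤ Φ x) := by
  have hN_sq : ∀ x, N x ^ 2 = ∑ k ∈ Icc 1 (T + 1), (x k - x (k - 1)) ^ 2 := fun x => by
    rw [hN, Real.sq_sqrt (sum_nonneg fun k _ => sq_nonneg _)]
  have hN_nonneg : ∀ x, 0 ≤ N x := fun x => by rw [hN]; positivity
  have hpoincare : ∀ x ∈ S, ∑ k ∈ Icc 1 T, x k ^ 2 ≤ c₂ * N x ^ 2 := fun x hx =>
    hN_sq x ▸ hc₂ x hx
  have ha : 0 < 1 / 2 - max α 0 * c₂ := by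
    have : max α 0 < 1 / 2 / c₂ := by rw [div_div]; exact max_lt hα (by positivity)
    linarith [(lt_div_iff₀ hc₂pos).1 this]
  have hlower : ∀ x ∈ S, (1 / 2 - max α 0 * c₂) * N x ^ 2 -
      |β| * √(#(Icc 1 T) * c₂) * N x + ∑ k ∈ Icc 1 T, γ k ≤ Φ x := fun x hx => by
    have := le_sum_quadratic_of_sum_sq_le _ x γ α β hc₂pos.le (hN_nonneg x) (hpoincare x hx)
    have := sum_le_sum fun k hk => hbound k hk (x k)
    rw [hΦ, ← sum_div, ← hN_sq]
    linarith
  have hcoercive : ∀ M, ∃ R, ∀ x ∈ S, R < N x → M < Φ x := fun M =>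
    (exists_forall_lt_quadratic ha _ _ M).imp fun R hR x hx hRx =>
      (hR _ hRx).trans_le (hlower x hx)
  refine ⟨hcoercive, ?_⟩
  obtain ⟨R, hR⟩ := hcoercive (Φ 0)
  subst hS
  have hcont : Continuous Φ := by
    rw [funext hΦ]
    fun_prop
  refine hcont.continuousOn.exists_isMinOn_of_lt_subset (isClosed_dirichletSpace T)
    (isCompact_univ_pi fun _ => isCompact_Icc (a := -(√c₂ * R)) (b := √c₂ * R))
    ⟨rfl, fun _ _ => rfl⟩ fun x hx hlt k _ => abs_le.1 <|
      (abs_apply_le_of_mem_dirichletSpace hx hc₂pos.le (hN_nonneg x) (hpoincare x hx) k).trans <|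
        by gcongr; exact not_lt.1 fun hRx => (hR x hx hRx).not_gt hlt

/-- If `f(k,s) ≥ -α s² + β s + γ k` with `α < 1/(2c₂)` (`c₂` the discrete Poincaré constant),
then `x ↦ ∑ |Δx(k-1)|²/2 + ∑ f(k, x k)` is coercive on `H` and attains its minimum. -/
theorem stmt_5 (T : ℕ) (hT : 1 ≤ T)
    (S : Set (ℕ → ℝ))
    (hS : S = {x : ℕ → ℝ | x 0 = 0 ∧ ∀ k, T + 1 ≤ k → x k = 0})
    (N : (ℕ → ℝ) → ℝ)
    (hN : ∀ x, N x = Real.sqrt (∑ k ∈ Finset.Icc 1 (T + 1), (x k - x (k - 1)) ^ 2))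
    (c₂ : ℝ) (hc₂pos : 0 < c₂)
    (hc₂ : ∀ x ∈ S, ∑ k ∈ Finset.Icc 1 T, (x k) ^ 2 ≤
      c₂ * ∑ k ∈ Finset.Icc 1 (T + 1), (x k - x (k - 1)) ^ 2)
    (hc₂min : ∀ c' : ℝ, 0 < c' →
      (∀ x ∈ S, ∑ k ∈ Finset.Icc 1 T, (x k) ^ 2 ≤
        c' * ∑ k ∈ Finset.Icc 1 (T + 1), (x k - x (k - 1)) ^ 2) → c₂ ≤ c')
    (f : ℕ → ℝ → ℝ) (hf : ∀ k, Continuous (f k))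
    (α β : ℝ) (γ : ℕ → ℝ) (hα : α < 1 / (2 * c₂))
    (hbound : ∀ k ∈ Finset.Icc 1 T, ∀ s : ℝ, -α * s ^ 2 + β * s + γ k ≤ f k s)
    (Φ : (ℕ → ℝ) → ℝ)
    (hΦ : ∀ x, Φ x = (∑ k ∈ Finset.Icc 1 (T + 1), (x k - x (k - 1)) ^ 2 / 2) +
      ∑ k ∈ Finset.Icc 1 T, f k (x k)) :
    (∀ M : ℝ, ∃ R : ℝ, ∀ x ∈ S, R < N x → M < Φ x) ∧
    (∃ x₀ ∈ S, ∀ x ∈ S, Φ x₀ ≤ Φ x) :=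
  stmt_5_general T S hS N hN c₂ hc₂pos hc₂ f hf α β γ hα hbound Φ hΦ
end

section
/- Let A and B be nonempty compact convex subsets of finite-dimensional real normed spaces and J : A × B → ℝ continuous such that x ↦ J(x,y) is convex for each y ∈ B and y ↦ J(x,y) is concave for each x ∈ A. Then sup_{y∈B} inf_{x∈A} J(x,y) = inf_{x∈A} sup_{y∈B} J(x,y), and J has a saddle point (x₀,y₀) ∈ A × B, i.e., J(x₀,y) ≤ J(x₀,y₀) ≤ J(x,y₀) for all x ∈ A, y ∈ B. -/
/-!
Sion's minimax theorem (`Sion.exists_isSaddlePointOn`) gives a saddle point `(x₀, y₀)` of any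
function that is lower semicontinuous and quasiconvex in `x` and upper semicontinuous and
quasiconcave in `y` on a product of compact convex sets; continuous convex–concave functions
qualify. At a saddle point both `sup inf` and `inf sup` equal `J x₀ y₀`; since these are
conditionally complete suprema and infima in `ℝ`, this needs the sections of `J` to be bounded,
which compactness provides.
-/

open Set

namespace IsSaddlePointOn

variable {E F β : Type*} [ConditionallyCompleteLattice β] {X : Set E} {Y : Set F}
  {f : E → F → β} {a : E} {b : F}

theorem ciInf_ciSup_eq (ha : a ∈ X) (hb : b ∈ Y) (h : IsSaddlePointOn X Y f a b)
    (hY : ∀ x ∈ X, BddAbove ((f x ·) '' Y)) :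
    ⨅ x : X, ⨆ y : Y, f x y = f a b := by
  have hsup_eq : ⨆ y : Y, f a y = f a b :=
    IsLUB.ciSup_set_eq (IsGreatest.isLUB ⟨mem_image_of_mem _ hb, by
      rintro _ ⟨y, hy, rfl⟩; exact h a ha y hy⟩) ⟨b, hb⟩
  refine IsGLB.ciInf_set_eq (f := fun x => ⨆ y : Y, f x y)
    (IsLeast.isGLB ⟨⟨a, ha, hsup_eq⟩, ?_⟩) ⟨a, ha⟩
  rintro _ ⟨x, hx, rfl⟩
  exact (h x hx b hb).trans (le_ciSup_set (hY x hx) hb)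

theorem ciSup_ciInf_eq (ha : a ∈ X) (hb : b ∈ Y) (h : IsSaddlePointOn X Y f a b)
    (hX : ∀ y ∈ Y, BddBelow ((f · y) '' X)) :
    ⨆ y : Y, ⨅ x : X, f x y = f a b :=
  ciInf_ciSup_eq (β := βᵒᵈ) (f := fun y x => OrderDual.toDual (f x y)) hb ha
    (fun y hy x hx => h x hx y hy) hX

end IsSaddlePointOn

theorem stmt_6_general {E F : Type*}
    [NormedAddCommGroup E] [NormedSpace ℝ E]
    [NormedAddCommGroup F] [NormedSpace ℝ F]
    (A : Set E) (B : Set F)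
    (hAne : A.Nonempty) (hAc : IsCompact A) (hAconv : Convex ℝ A)
    (hBne : B.Nonempty) (hBc : IsCompact B) (hBconv : Convex ℝ B)
    (J : E → F → ℝ)
    (hJcont : ContinuousOn (fun p : E × F => J p.1 p.2) (A ×ˢ B))
    (hconv : ∀ y ∈ B, ConvexOn ℝ A (fun x => J x y))
    (hconc : ∀ x ∈ A, ConcaveOn ℝ B (fun y => J x y)) :
    (⨆ y : B, ⨅ x : A, J x y) = (⨅ x : A, ⨆ y : B, J x y) ∧
    ∃ x₀ ∈ A, ∃ y₀ ∈ B, ∀ x ∈ A, ∀ y ∈ B, J x₀ y ≤ J x₀ y₀ ∧ J x₀ y₀ ≤ J x y₀ := by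
  have hJx : ∀ y ∈ B, ContinuousOn (fun x => J x y) A := fun y hy =>
    hJcont.uncurry_right y hy
  have hJy : ∀ x ∈ A, ContinuousOn (fun y => J x y) B := fun x hx =>
    hJcont.uncurry_left x hx
  obtain ⟨x₀, hx₀, y₀, hy₀, hsaddle⟩ := Sion.exists_isSaddlePointOn hAne hAconv hAc
    (fun y hy => (hJx y hy).lowerSemicontinuousOn) (fun y hy => (hconv y hy).quasiconvexOn)
    hBconv hBne hBc
    (fun x hx => (hJy x hx).upperSemicontinuousOn) (fun x hx => (hconc x hx).quasiconcaveOn)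
  refine ⟨?_, x₀, hx₀, y₀, hy₀,
    fun x hx y hy => ⟨hsaddle x₀ hx₀ y hy, hsaddle x hx y₀ hy₀⟩⟩
  rw [hsaddle.ciSup_ciInf_eq hx₀ hy₀ fun y hy => hAc.bddBelow_image (hJx y hy),
    hsaddle.ciInf_ciSup_eq hx₀ hy₀ fun x hx => hBc.bddAbove_image (hJy x hx)]

/-- Finite-dimensional Fan/von Neumann min-max theorem: a continuous convex–concave
function on a product of nonempty compact convex sets satisfies `sup inf = inf sup`
and has a saddle point. -/
theorem stmt_6 {E F : Type*}
    [NormedAddCommGroup E] [NormedSpace ℝ E] [FiniteDimensional ℝ E]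
    [NormedAddCommGroup F] [NormedSpace ℝ F] [FiniteDimensional ℝ F]
    (A : Set E) (B : Set F)
    (hAne : A.Nonempty) (hAc : IsCompact A) (hAconv : Convex ℝ A)
    (hBne : B.Nonempty) (hBc : IsCompact B) (hBconv : Convex ℝ B)
    (J : E → F → ℝ)
    (hJcont : ContinuousOn (fun p : E × F => J p.1 p.2) (A ×ˢ B))
    (hconv : ∀ y ∈ B, ConvexOn ℝ A (fun x => J x y))
    (hconc : ∀ x ∈ A, ConcaveOn ℝ B (fun y => J x y)) :
    (⨆ y : B, ⨅ x : A, J x y) = (⨅ x : A, ⨆ y : B, J x y) ∧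
    ∃ x₀ ∈ A, ∃ y₀ ∈ B, ∀ x ∈ A, ∀ y ∈ B, J x₀ y ≤ J x₀ y₀ ∧ J x₀ y₀ ≤ J x y₀ :=
  stmt_6_general A B hAne hAc hAconv hBne hBc hBconv J hJcont hconv hconc
end

section
/- Let A, B be nonempty compact sets in finite-dimensional normed spaces and J : A × B → ℝ continuous with sup_y inf_x J(x,y) = inf_x sup_y J(x,y). Then the set of saddle points V = {(x̄,ȳ) ∈ A × B : J(x̄,y) ≤ J(x̄,ȳ) ≤ J(x,ȳ) for all x ∈ A, y ∈ B} is a closed (hence compact) subset of A × B. -/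
/-!
Each of the two saddle inequalities at fixed `x ∈ A`, `y ∈ B` compares two functions of `p`
that are continuous on the closed set `A ×ˢ B`, so it passes from the saddle points to every
point of their closure. Closed subsets of the compact set `A ×ˢ B` are compact.
-/

section SaddlePoints

variable {X Y β : Type*} [Preorder β]

def saddlePoints (A : Set X) (B : Set Y) (J : X → Y → β) : Set (X × Y) :=
  {p | p.1 ∈ A ∧ p.2 ∈ B ∧ ∀ x ∈ A, ∀ y ∈ B, J p.1 y ≤ J p.1 p.2 ∧ J p.1 p.2 ≤ J x p.2}

variable {A : Set X} {B : Set Y} {J : X → Y → β}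

theorem saddlePoints_subset_prod : saddlePoints A B J ⊆ A ×ˢ B :=
  fun _ hp => ⟨hp.1, hp.2.1⟩

variable [TopologicalSpace X] [TopologicalSpace Y] [TopologicalSpace β] [OrderClosedTopology β]

theorem isClosed_saddlePoints (hA : IsClosed A) (hB : IsClosed B)
    (hJ : ContinuousOn (fun p : X × Y => J p.1 p.2) (A ×ˢ B)) :
    IsClosed (saddlePoints A B J) := by
  refine isClosed_of_closure_subset fun p hp => ?_
  have hpAB : p ∈ A ×ˢ B := (hA.prod hB).closure_subset_iff.2 saddlePoints_subset_prod hp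
  have le_of_forall_saddle {f g : X × Y → β} (hf : ContinuousOn f (A ×ˢ B))
      (hg : ContinuousOn g (A ×ˢ B)) (h : ∀ q ∈ saddlePoints A B J, f q ≤ g q) : f p ≤ g p :=
    ContinuousWithinAt.closure_le hp ((hf p hpAB).mono saddlePoints_subset_prod)
      ((hg p hpAB).mono saddlePoints_subset_prod) h
  refine ⟨hpAB.1, hpAB.2, fun x hx y hy => ⟨?_, ?_⟩⟩
  · refine le_of_forall_saddle ?_ hJ fun q hq => (hq.2.2 x hx y hy).1
    exact hJ.comp (continuousOn_fst.prodMk continuousOn_const) fun q hq => ⟨hq.1, hy⟩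
  · refine le_of_forall_saddle hJ ?_ fun q hq => (hq.2.2 x hx y hy).2
    exact hJ.comp (continuousOn_const.prodMk continuousOn_snd) fun q hq => ⟨hx, hq.2⟩

theorem IsCompact.saddlePoints [T2Space X] [T2Space Y] (hA : IsCompact A) (hB : IsCompact B)
    (hJ : ContinuousOn (fun p : X × Y => J p.1 p.2) (A ×ˢ B)) :
    IsCompact (saddlePoints A B J) :=
  (hA.prod hB).of_isClosed_subset (isClosed_saddlePoints hA.isClosed hB.isClosed hJ)
    saddlePoints_subset_prod

end SaddlePoints

theorem stmt_8_general {E F : Type*}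
    [NormedAddCommGroup E]
    [NormedAddCommGroup F]
    (A : Set E) (B : Set F)
    (hAc : IsCompact A)
    (hBc : IsCompact B)
    (J : E → F → ℝ)
    (hJcont : ContinuousOn (fun p : E × F => J p.1 p.2) (A ×ˢ B)) :
    IsClosed {p : E × F | p.1 ∈ A ∧ p.2 ∈ B ∧
        ∀ x ∈ A, ∀ y ∈ B, J p.1 y ≤ J p.1 p.2 ∧ J p.1 p.2 ≤ J x p.2} ∧
    IsCompact {p : E × F | p.1 ∈ A ∧ p.2 ∈ B ∧
        ∀ x ∈ A, ∀ y ∈ B, J p.1 y ≤ J p.1 p.2 ∧ J p.1 p.2 ≤ J x p.2} :=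
  ⟨isClosed_saddlePoints hAc.isClosed hBc.isClosed hJcont, hAc.saddlePoints hBc hJcont⟩

/-- The set of saddle points of a continuous function on a product of nonempty compact
sets (with `sup inf = inf sup`) is closed, hence compact. -/
theorem stmt_8 {E F : Type*}
    [NormedAddCommGroup E] [NormedSpace ℝ E] [FiniteDimensional ℝ E]
    [NormedAddCommGroup F] [NormedSpace ℝ F] [FiniteDimensional ℝ F]
    (A : Set E) (B : Set F)
    (hAne : A.Nonempty) (hAc : IsCompact A)
    (hBne : B.Nonempty) (hBc : IsCompact B)
    (J : E → F → ℝ)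
    (hJcont : ContinuousOn (fun p : E × F => J p.1 p.2) (A ×ˢ B))
    (hminimax : (⨆ y : B, ⨅ x : A, J x y) = (⨅ x : A, ⨆ y : B, J x y)) :
    IsClosed {p : E × F | p.1 ∈ A ∧ p.2 ∈ B ∧
        ∀ x ∈ A, ∀ y ∈ B, J p.1 y ≤ J p.1 p.2 ∧ J p.1 p.2 ≤ J x p.2} ∧
    IsCompact {p : E × F | p.1 ∈ A ∧ p.2 ∈ B ∧
        ∀ x ∈ A, ∀ y ∈ B, J p.1 y ≤ J p.1 p.2 ∧ J p.1 p.2 ≤ J x p.2} :=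
  stmt_8_general A B hAc hBc J hJcont
end

section
/- Let A, B be nonempty compact sets in finite-dimensional normed spaces, and J_n : A × B → ℝ continuous with J_n → J₀ uniformly on A × B. Suppose (x_n, y_n) is a saddle point of J_n for each n ≥ 1 and (x_n, y_n) → (x₀, y₀). Then (x₀, y₀) is a saddle point of J₀. -/
/-!
Uniform convergence together with continuity of `J₀` gives `J n (xs n) y → J₀ x₀ y` and
`J n x (ys n) → J₀ x y₀`, so the saddle inequality `J n (xs n) y ≤ J n x (ys n)` passes to the
limit; closedness of the compact sets keeps `(x₀, y₀)` in `A × B`.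
-/

open Filter Topology

theorem isSaddlePointOn_iff_forall_le_and_le {E F β : Type*} [Preorder β]
    {X : Set E} {Y : Set F} {f : E → F → β} {a : E} {b : F} (ha : a ∈ X) (hb : b ∈ Y) :
    IsSaddlePointOn X Y f a b ↔ ∀ x ∈ X, ∀ y ∈ Y, f a y ≤ f a b ∧ f a b ≤ f x b :=
  ⟨fun h x hx y hy => ⟨h a ha y hy, h x hx b hb⟩,
    fun h x hx y hy => (h x hx y hy).1.trans (h x hx y hy).2⟩

theorem TendstoUniformlyOn.tendsto_apply_of_tendsto_of_eventually_mem
    {ι α γ : Type*} [TopologicalSpace α] [UniformSpace γ] {l : Filter ι}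
    {F : ι → α → γ} {f : α → γ} {s : Set α} (hF : TendstoUniformlyOn F f l s)
    {q : α} (hf : ContinuousWithinAt f s q) {g : ι → α} (hg : Tendsto g l (𝓝 q))
    (hgs : ∀ᶠ n in l, g n ∈ s) :
    Tendsto (fun n => F n (g n)) l (𝓝 (f q)) :=
  hF.tendsto_comp hf (tendsto_nhdsWithin_iff.2 ⟨hg, hgs⟩)

theorem IsSaddlePointOn.of_tendstoUniformlyOn {ι α β γ : Type*}
    [TopologicalSpace α] [TopologicalSpace β] [UniformSpace γ] [Preorder γ]
    [OrderClosedTopology γ] {l : Filter ι} [l.NeBot] {A : Set α} {B : Set β}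
    {J : ι → α → β → γ} {J₀ : α → β → γ}
    (hJ₀ : ContinuousOn (fun p : α × β => J₀ p.1 p.2) (A ×ˢ B))
    (hunif : TendstoUniformlyOn (fun n (p : α × β) => J n p.1 p.2)
      (fun p : α × β => J₀ p.1 p.2) l (A ×ˢ B))
    {xs : ι → α} {ys : ι → β} (hsaddle : ∀ᶠ n in l, IsSaddlePointOn A B (J n) (xs n) (ys n))
    (hxs : ∀ᶠ n in l, xs n ∈ A) (hys : ∀ᶠ n in l, ys n ∈ B)
    {x₀ : α} {y₀ : β} (hx : Tendsto xs l (𝓝 x₀)) (hy : Tendsto ys l (𝓝 y₀))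
    (hx₀ : x₀ ∈ A) (hy₀ : y₀ ∈ B) :
    IsSaddlePointOn A B J₀ x₀ y₀ := by
  intro x hx' y hy'
  have hlim_left : Tendsto (fun n => J n (xs n) y) l (𝓝 (J₀ x₀ y)) :=
    hunif.tendsto_apply_of_tendsto_of_eventually_mem (hJ₀ _ ⟨hx₀, hy'⟩)
      (hx.prodMk_nhds tendsto_const_nhds) (hxs.mono fun _ h => ⟨h, hy'⟩)
  have hlim_right : Tendsto (fun n => J n x (ys n)) l (𝓝 (J₀ x y₀)) :=
    hunif.tendsto_apply_of_tendsto_of_eventually_mem (hJ₀ _ ⟨hx', hy₀⟩)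
      (tendsto_const_nhds.prodMk_nhds hy) (hys.mono fun _ h => ⟨hx', h⟩)
  exact le_of_tendsto_of_tendsto hlim_left hlim_right (hsaddle.mono fun _ h => h x hx' y hy')

theorem stmt_10_general {E F : Type*}
    [NormedAddCommGroup E]
    [NormedAddCommGroup F]
    (A : Set E) (B : Set F)
    (hAc : IsCompact A)
    (hBc : IsCompact B)
    (J : ℕ → E → F → ℝ) (J₀ : E → F → ℝ)
    (hJ₀cont : ContinuousOn (fun p : E × F => J₀ p.1 p.2) (A ×ˢ B))
    (hunif : TendstoUniformlyOn (fun n (p : E × F) => J n p.1 p.2)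
      (fun p : E × F => J₀ p.1 p.2) Filter.atTop (A ×ˢ B))
    (xs : ℕ → E) (ys : ℕ → F)
    (hmem : ∀ n, xs n ∈ A ∧ ys n ∈ B)
    (hsaddle : ∀ n, ∀ x ∈ A, ∀ y ∈ B,
      J n (xs n) y ≤ J n (xs n) (ys n) ∧ J n (xs n) (ys n) ≤ J n x (ys n))
    (x₀ : E) (y₀ : F)
    (hlim : Filter.Tendsto (fun n => (xs n, ys n)) Filter.atTop (nhds (x₀, y₀))) :
    x₀ ∈ A ∧ y₀ ∈ B ∧
      ∀ x ∈ A, ∀ y ∈ B, J₀ x₀ y ≤ J₀ x₀ y₀ ∧ J₀ x₀ y₀ ≤ J₀ x y₀ := by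
  have hxs : ∀ᶠ n in atTop, xs n ∈ A := .of_forall fun n => (hmem n).1
  have hys : ∀ᶠ n in atTop, ys n ∈ B := .of_forall fun n => (hmem n).2
  have hx₀ : x₀ ∈ A := hAc.isClosed.mem_of_tendsto hlim.fst_nhds hxs
  have hy₀ : y₀ ∈ B := hBc.isClosed.mem_of_tendsto hlim.snd_nhds hys
  have hsaddle_n : ∀ᶠ n in atTop, IsSaddlePointOn A B (J n) (xs n) (ys n) :=
    .of_forall fun n => (isSaddlePointOn_iff_forall_le_and_le (hmem n).1 (hmem n).2).2 (hsaddle n)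
  refine ⟨hx₀, hy₀, (isSaddlePointOn_iff_forall_le_and_le hx₀ hy₀).1 ?_⟩
  exact .of_tendstoUniformlyOn hJ₀cont hunif hsaddle_n hxs hys hlim.fst_nhds hlim.snd_nhds hx₀ hy₀

/-- If `J_n → J₀` uniformly on `A × B`, `(x_n, y_n)` is a saddle point of `J_n` and
`(x_n, y_n) → (x₀, y₀)`, then `(x₀, y₀)` is a saddle point of `J₀`. -/
theorem stmt_10 {E F : Type*}
    [NormedAddCommGroup E] [NormedSpace ℝ E] [FiniteDimensional ℝ E]
    [NormedAddCommGroup F] [NormedSpace ℝ F] [FiniteDimensional ℝ F]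
    (A : Set E) (B : Set F)
    (hAne : A.Nonempty) (hAc : IsCompact A)
    (hBne : B.Nonempty) (hBc : IsCompact B)
    (J : ℕ → E → F → ℝ) (J₀ : E → F → ℝ)
    (hJcont : ∀ n, ContinuousOn (fun p : E × F => J n p.1 p.2) (A ×ˢ B))
    (hJ₀cont : ContinuousOn (fun p : E × F => J₀ p.1 p.2) (A ×ˢ B))
    (hunif : TendstoUniformlyOn (fun n (p : E × F) => J n p.1 p.2)
      (fun p : E × F => J₀ p.1 p.2) Filter.atTop (A ×ˢ B))
    (xs : ℕ → E) (ys : ℕ → F)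
    (hmem : ∀ n, xs n ∈ A ∧ ys n ∈ B)
    (hsaddle : ∀ n, ∀ x ∈ A, ∀ y ∈ B,
      J n (xs n) y ≤ J n (xs n) (ys n) ∧ J n (xs n) (ys n) ≤ J n x (ys n))
    (x₀ : E) (y₀ : F)
    (hlim : Filter.Tendsto (fun n => (xs n, ys n)) Filter.atTop (nhds (x₀, y₀))) :
    x₀ ∈ A ∧ y₀ ∈ B ∧
      ∀ x ∈ A, ∀ y ∈ B, J₀ x₀ y ≤ J₀ x₀ y₀ ∧ J₀ x₀ y₀ ≤ J₀ x y₀ :=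
  stmt_10_general A B hAc hBc J J₀ hJ₀cont hunif xs ys hmem hsaddle x₀ y₀ hlim
end

section
/- Let A, B be nonempty compact sets in finite-dimensional normed spaces, J_n : A × B → ℝ continuous with J_n → J₀ uniformly, and suppose the saddle point set V_n of J_n is nonempty for each n ≥ 1. Then the upper limit limsup_n V_n (the set of accumulation points of sequences (p_n) with p_n ∈ V_n) is nonempty and contained in the saddle point set V₀ of J₀. -/
/-! Saddle points pass to limits: if `p` is a cluster point of saddle points `pₙ` of `Jₙ`,
then along an ultrafilter on which `pₙ → p`, the inequalities `Jₙ(pₙ.1, y) ≤ Jₙ(x, pₙ.2)`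
converge to `J₀(p.1, y) ≤ J₀(x, p.2)`, because uniform convergence together with continuity
of the limit lets one evaluate `Jₙ` along convergent sequences. Nonemptiness of `limsup Vₙ` is
compactness of `A × B`. -/

open Filter Topology

lemma mem_prod_and_isSaddlePointOn_iff {E F β : Type*} [Preorder β] {X : Set E} {Y : Set F}
    {f : E → F → β} {p : E × F} :
    p ∈ X ×ˢ Y ∧ IsSaddlePointOn X Y f p.1 p.2 ↔
      p.1 ∈ X ∧ p.2 ∈ Y ∧ ∀ x ∈ X, ∀ y ∈ Y, f p.1 y ≤ f p.1 p.2 ∧ f p.1 p.2 ≤ f x p.2 := by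
  refine ⟨fun ⟨⟨ha, hb⟩, h⟩ => ⟨ha, hb, fun x hx y hy => ⟨h _ ha y hy, h x hx _ hb⟩⟩,
    fun ⟨ha, hb, h⟩ => ⟨⟨ha, hb⟩, fun x hx y hy => ?_⟩⟩
  exact (h x hx y hy).1.trans (h x hx y hy).2

section UniformLimit

variable {ι X Y β : Type*} [TopologicalSpace X] [TopologicalSpace Y] [UniformSpace β]
  {l : Filter ι} {F : ι → X → Y → β} {f : X → Y → β}

lemma TendstoUniformlyOn.tendsto_apply_of_tendsto {s : Set (X × Y)}
    (hF : TendstoUniformlyOn (fun i (p : X × Y) => F i p.1 p.2) (fun p => f p.1 p.2) l s)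
    (hf : ContinuousOn (fun p : X × Y => f p.1 p.2) s)
    {u : ι → X} {v : ι → Y} {x : X} {y : Y}
    (hu : Tendsto u l (𝓝 x)) (hv : Tendsto v l (𝓝 y))
    (huv : ∀ i, (u i, v i) ∈ s) (hxy : (x, y) ∈ s) :
    Tendsto (fun i => F i (u i) (v i)) l (𝓝 (f x y)) :=
  hF.tendsto_comp (hf.continuousWithinAt hxy) <|
    tendsto_nhdsWithin_of_tendsto_nhds_of_eventually_within _ (hu.prodMk_nhds hv)
      (Eventually.of_forall huv)

variable [Preorder β] [OrderClosedTopology β] {A : Set X} {B : Set Y}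

lemma IsSaddlePointOn.of_tendsto [l.NeBot]
    (hF : TendstoUniformlyOn (fun i (p : X × Y) => F i p.1 p.2) (fun p => f p.1 p.2) l (A ×ˢ B))
    (hf : ContinuousOn (fun p : X × Y => f p.1 p.2) (A ×ˢ B))
    {u : ι → X × Y} (hu : ∀ i, u i ∈ A ×ˢ B)
    (hsaddle : ∀ i, IsSaddlePointOn A B (F i) (u i).1 (u i).2)
    {p : X × Y} (hp : p ∈ A ×ˢ B) (hup : Tendsto u l (𝓝 p)) :
    IsSaddlePointOn A B f p.1 p.2 := by
  have hu₁ : Tendsto (fun i => (u i).1) l (𝓝 p.1) := (continuous_fst.tendsto p).comp hup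
  have hu₂ : Tendsto (fun i => (u i).2) l (𝓝 p.2) := (continuous_snd.tendsto p).comp hup
  intro x hx y hy
  exact le_of_tendsto_of_tendsto'
    (hF.tendsto_apply_of_tendsto hf hu₁ tendsto_const_nhds (fun i => ⟨(hu i).1, hy⟩) ⟨hp.1, hy⟩)
    (hF.tendsto_apply_of_tendsto hf tendsto_const_nhds hu₂ (fun i => ⟨hx, (hu i).2⟩) ⟨hx, hp.2⟩)
    fun i => hsaddle i x hx y hy

lemma IsSaddlePointOn.of_mapClusterPt
    (hF : TendstoUniformlyOn (fun i (p : X × Y) => F i p.1 p.2) (fun p => f p.1 p.2) l (A ×ˢ B))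
    (hf : ContinuousOn (fun p : X × Y => f p.1 p.2) (A ×ˢ B))
    {u : ι → X × Y} (hu : ∀ i, u i ∈ A ×ˢ B)
    (hsaddle : ∀ i, IsSaddlePointOn A B (F i) (u i).1 (u i).2)
    {p : X × Y} (hp : p ∈ A ×ˢ B) (hup : MapClusterPt p l u) :
    IsSaddlePointOn A B f p.1 p.2 := by
  obtain ⟨U, hUl, hUp⟩ := mapClusterPt_iff_ultrafilter.1 hup
  exact .of_tendsto (fun s hs => hUl (hF s hs)) hf hu hsaddle hp hUp

end UniformLimit

theorem stmt_11_general {E F : Type*}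
    [NormedAddCommGroup E]
    [NormedAddCommGroup F]
    (A : Set E) (B : Set F)
    (hAc : IsCompact A)
    (hBc : IsCompact B)
    (J : ℕ → E → F → ℝ) (J₀ : E → F → ℝ)
    (hJ₀cont : ContinuousOn (fun p : E × F => J₀ p.1 p.2) (A ×ˢ B))
    (hunif : TendstoUniformlyOn (fun n (p : E × F) => J n p.1 p.2)
      (fun p : E × F => J₀ p.1 p.2) Filter.atTop (A ×ˢ B))
    (V : ℕ → Set (E × F))
    (hV : ∀ n, V n = {p : E × F | p.1 ∈ A ∧ p.2 ∈ B ∧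
      ∀ x ∈ A, ∀ y ∈ B, J n p.1 y ≤ J n p.1 p.2 ∧ J n p.1 p.2 ≤ J n x p.2})
    (hVne : ∀ n, (V n).Nonempty)
    (V₀ : Set (E × F))
    (hV₀ : V₀ = {p : E × F | p.1 ∈ A ∧ p.2 ∈ B ∧
      ∀ x ∈ A, ∀ y ∈ B, J₀ p.1 y ≤ J₀ p.1 p.2 ∧ J₀ p.1 p.2 ≤ J₀ x p.2})
    (L : Set (E × F))
    (hL : L = {p : E × F | ∃ a : ℕ → E × F, (∀ n, a n ∈ V n) ∧
      MapClusterPt p Filter.atTop a}) :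
    L.Nonempty ∧ L ⊆ V₀ := by
  have hV' : ∀ n q, q ∈ V n → q ∈ A ×ˢ B ∧ IsSaddlePointOn A B (J n) q.1 q.2 := fun n q hq =>
    mem_prod_and_isSaddlePointOn_iff.2 (by rwa [hV n] at hq)
  have hABc : IsCompact (A ×ˢ B) := hAc.prod hBc
  subst hV₀ hL
  refine ⟨?_, fun p ⟨a, ha, hp⟩ => ?_⟩
  · choose a ha using hVne
    obtain ⟨q, -, hq⟩ := hABc.exists_mapClusterPt (f := atTop) (u := a)
      (tendsto_principal.2 <| .of_forall fun n => (hV' n _ (ha n)).1)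
    exact ⟨q, a, ha, hq⟩
  · have hpAB : p ∈ A ×ˢ B :=
      hABc.isClosed.mem_of_mapClusterPt hp (.of_forall fun n => (hV' n _ (ha n)).1)
    exact mem_prod_and_isSaddlePointOn_iff.1 ⟨hpAB, .of_mapClusterPt hunif hJ₀cont
      (fun n => (hV' n _ (ha n)).1) (fun n => (hV' n _ (ha n)).2) hpAB hp⟩

/-- If `J_n → J₀` uniformly on the product of compact sets `A × B` and each saddle point
set `V_n` is nonempty, then `limsup V_n` (the set of accumulation points of sequences
`p_n ∈ V_n`) is nonempty and contained in the saddle point set `V₀` of `J₀`. -/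
theorem stmt_11 {E F : Type*}
    [NormedAddCommGroup E] [NormedSpace ℝ E] [FiniteDimensional ℝ E]
    [NormedAddCommGroup F] [NormedSpace ℝ F] [FiniteDimensional ℝ F]
    (A : Set E) (B : Set F)
    (hAne : A.Nonempty) (hAc : IsCompact A)
    (hBne : B.Nonempty) (hBc : IsCompact B)
    (J : ℕ → E → F → ℝ) (J₀ : E → F → ℝ)
    (hJcont : ∀ n, ContinuousOn (fun p : E × F => J n p.1 p.2) (A ×ˢ B))
    (hJ₀cont : ContinuousOn (fun p : E × F => J₀ p.1 p.2) (A ×ˢ B))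
    (hunif : TendstoUniformlyOn (fun n (p : E × F) => J n p.1 p.2)
      (fun p : E × F => J₀ p.1 p.2) Filter.atTop (A ×ˢ B))
    (V : ℕ → Set (E × F))
    (hV : ∀ n, V n = {p : E × F | p.1 ∈ A ∧ p.2 ∈ B ∧
      ∀ x ∈ A, ∀ y ∈ B, J n p.1 y ≤ J n p.1 p.2 ∧ J n p.1 p.2 ≤ J n x p.2})
    (hVne : ∀ n, (V n).Nonempty)
    (V₀ : Set (E × F))
    (hV₀ : V₀ = {p : E × F | p.1 ∈ A ∧ p.2 ∈ B ∧
      ∀ x ∈ A, ∀ y ∈ B, J₀ p.1 y ≤ J₀ p.1 p.2 ∧ J₀ p.1 p.2 ≤ J₀ x p.2})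
    (L : Set (E × F))
    (hL : L = {p : E × F | ∃ a : ℕ → E × F, (∀ n, a n ∈ V n) ∧
      MapClusterPt p Filter.atTop a}) :
    L.Nonempty ∧ L ⊆ V₀ :=
  stmt_11_general A B hAc hBc J J₀ hJ₀cont hunif V hV hVne V₀ hV₀ L hL
end

section
/- Under the hypotheses of the saddle point existence theorem (H1–H5 of the paper), there exist radii r₁, r₂ > 0, independent of which saddle point is chosen (for fixed u), such that every saddle point (x_u, y_u) of J_u satisfies ‖x_u‖ ≤ r₁ and ‖y_u‖ ≤ r₂. -/
/-!
Test the saddle inequalities against the origin: `J u xu 0 ≤ J u xu yu ≤ J u 0 yu`.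
Along `y = 0` the quadratic minorant of `F`, after absorbing its linear term by Young's inequality
into a slightly larger quadratic coefficient `a < 1/(2 c₂)`, combines with the Poincaré inequality
`∑ x² ≤ c₂ ‖x‖²` to give `J u x 0 ≥ ε₁ ‖x‖² + C₁`; symmetrically `J u 0 y ≤ -ε₂ ‖y‖² + C₂`.
Hence `ε₁ ‖xu‖² + ε₂ ‖yu‖² ≤ C₂ - C₁`, with constants independent of the saddle point.
-/

open Finset

noncomputable def discreteEnergy (T : ℕ) (x : ℕ → ℝ) : ℝ :=
  ∑ k ∈ Icc 1 (T + 1), (x k - x (k - 1)) ^ 2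

noncomputable def saddleFunctional (T : ℕ) (F : ℕ → ℝ → ℝ → ℝ → ℝ) (u x y : ℕ → ℝ) : ℝ :=
  (∑ k ∈ Icc 1 (T + 1), ((x k - x (k - 1)) ^ 2 / 2 - (y k - y (k - 1)) ^ 2 / 2)) +
    ∑ k ∈ Icc 1 T, F k (x k) (y k) (u k)

lemma discreteEnergy_nonneg (T : ℕ) (x : ℕ → ℝ) : 0 ≤ discreteEnergy T x :=
  sum_nonneg fun _ _ => sq_nonneg _

lemma neg_sq_div_le_mul_add_mul_sq {δ : ℝ} (hδ : 0 < δ) (b s : ℝ) :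
    -(b ^ 2 / (4 * δ)) ≤ b * s + δ * s ^ 2 := by
  have key : b * s + δ * s ^ 2 + b ^ 2 / (4 * δ) = (b + 2 * δ * s) ^ 2 / (4 * δ) := by
    field_simp; ring
  have : 0 ≤ (b + 2 * δ * s) ^ 2 / (4 * δ) := by positivity
  linarith

lemma neg_mul_sq_add_le_of_quadratic_minorant {α β γ a s f : ℝ} (hαa : α < a)
    (h : -α * s ^ 2 + β * s + γ ≤ f) : -a * s ^ 2 + (γ - β ^ 2 / (4 * (a - α))) ≤ f := by
  nlinarith [neg_sq_div_le_mul_add_mul_sq (sub_pos.2 hαa) β s]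

lemma saddleFunctional_zero_right (T : ℕ) (F : ℕ → ℝ → ℝ → ℝ → ℝ) (u x : ℕ → ℝ) :
    saddleFunctional T F u x 0 = discreteEnergy T x / 2 + ∑ k ∈ Icc 1 T, F k (x k) 0 (u k) := by
  simp [saddleFunctional, discreteEnergy, sum_div]

lemma saddleFunctional_swap (T : ℕ) (F : ℕ → ℝ → ℝ → ℝ → ℝ) (u x y : ℕ → ℝ) :
    saddleFunctional T F u x y = -saddleFunctional T (fun k s t v => -F k t s v) u y x := by
  simp only [saddleFunctional, neg_add, neg_neg, ← sum_neg_distrib, neg_sub]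

lemma exists_coercive_lower_bound {T : ℕ} {F : ℕ → ℝ → ℝ → ℝ → ℝ} {u : ℕ → ℝ} {c α β : ℝ}
    {γ : ℕ → ℝ} (hc : 0 < c) (hα : α < 1 / (2 * c))
    (hF : ∀ k ∈ Icc 1 T, ∀ s, -α * s ^ 2 + β * s + γ k ≤ F k s 0 (u k)) :
    ∃ ε > 0, ∃ C, ∀ x : ℕ → ℝ, ∑ k ∈ Icc 1 T, x k ^ 2 ≤ c * discreteEnergy T x →
      ε * discreteEnergy T x + C ≤ saddleFunctional T F u x 0 := by
  obtain ⟨a, ha, haα⟩ := exists_between (max_lt hα (by positivity : (0 : ℝ) < 1 / (2 * c)))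
  have hac : a * c < 1 / 2 := by
    calc a * c < 1 / (2 * c) * c := mul_lt_mul_of_pos_right haα hc
      _ = 1 / 2 := by field_simp
  refine ⟨1 / 2 - a * c, by linarith, ∑ k ∈ Icc 1 T, (γ k - β ^ 2 / (4 * (a - α))), ?_⟩
  intro x hx
  have hFx : -a * ∑ k ∈ Icc 1 T, x k ^ 2 + ∑ k ∈ Icc 1 T, (γ k - β ^ 2 / (4 * (a - α))) ≤
      ∑ k ∈ Icc 1 T, F k (x k) 0 (u k) := by
    rw [mul_sum, ← sum_add_distrib]
    exact sum_le_sum fun k hk =>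
      neg_mul_sq_add_le_of_quadratic_minorant (lt_of_le_of_lt (le_max_left _ _) ha) (hF k hk (x k))
  have ha0 : 0 ≤ a := (le_max_right _ _).trans ha.le
  rw [saddleFunctional_zero_right]
  nlinarith [mul_le_mul_of_nonneg_left hx ha0]

lemma exists_coercive_upper_bound {T : ℕ} {F : ℕ → ℝ → ℝ → ℝ → ℝ} {u : ℕ → ℝ} {c α β : ℝ}
    {γ : ℕ → ℝ} (hc : 0 < c) (hα : α < 1 / (2 * c))
    (hF : ∀ k ∈ Icc 1 T, ∀ t, F k 0 t (u k) ≤ α * t ^ 2 + β * t + γ k) :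
    ∃ ε > 0, ∃ C, ∀ y : ℕ → ℝ, ∑ k ∈ Icc 1 T, y k ^ 2 ≤ c * discreteEnergy T y →
      saddleFunctional T F u 0 y ≤ -(ε * discreteEnergy T y) + C := by
  obtain ⟨ε, hε, C, hC⟩ := exists_coercive_lower_bound (F := fun k s t v => -F k t s v) (u := u)
    (β := -β) (γ := -γ) hc hα fun k hk t => by simp only [Pi.neg_apply]; linarith [hF k hk t]
  refine ⟨ε, hε, -C, fun y hy => ?_⟩
  rw [saddleFunctional_swap]
  linarith [hC y hy]

theorem stmt_15_general (T : ℕ) (D : ℝ)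
    (S : Set (ℕ → ℝ))
    (hS : S = {x : ℕ → ℝ | x 0 = 0 ∧ ∀ k, T + 1 ≤ k → x k = 0})
    (c₂ : ℝ) (hc₂pos : 0 < c₂)
    (hc₂ : ∀ x ∈ S, ∑ k ∈ Finset.Icc 1 T, (x k) ^ 2 ≤
      c₂ * ∑ k ∈ Finset.Icc 1 (T + 1), (x k - x (k - 1)) ^ 2)
    (F : ℕ → ℝ → ℝ → ℝ → ℝ)
    (J : (ℕ → ℝ) → (ℕ → ℝ) → (ℕ → ℝ) → ℝ)
    (hJ : ∀ u x y, J u x y =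
      (∑ k ∈ Finset.Icc 1 (T + 1),
        ((x k - x (k - 1)) ^ 2 / 2 - (y k - y (k - 1)) ^ 2 / 2)) +
      ∑ k ∈ Finset.Icc 1 T, F k (x k) (y k) (u k))
    -- H2:
    (H2 : ∀ y ∈ S, ∃ α₁ β₁ : ℝ, ∃ γ₁ : ℕ → ℝ, α₁ < 1 / (2 * c₂) ∧
      ∀ k ∈ Finset.Icc 1 T, ∀ s u : ℝ, |u| ≤ D →
        -α₁ * s ^ 2 + β₁ * s + γ₁ k ≤ F k s (y k) u)
    -- H3:
    (H3 : ∀ x ∈ S, ∃ α₂ β₂ : ℝ, ∃ γ₂ : ℕ → ℝ, α₂ < 1 / (2 * c₂) ∧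
      ∀ k ∈ Finset.Icc 1 T, ∀ t u : ℝ, |u| ≤ D →
        F k (x k) t u ≤ α₂ * t ^ 2 + β₂ * t + γ₂ k) :
    ∀ u : ℕ → ℝ, (∀ k, |u k| ≤ D) →
      ∃ r₁ > (0 : ℝ), ∃ r₂ > (0 : ℝ), ∀ xu ∈ S, ∀ yu ∈ S,
        (∀ x ∈ S, ∀ y ∈ S, J u xu y ≤ J u xu yu ∧ J u xu yu ≤ J u x yu) →
          Real.sqrt (∑ k ∈ Finset.Icc 1 (T + 1), (xu k - xu (k - 1)) ^ 2) ≤ r₁ ∧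
          Real.sqrt (∑ k ∈ Finset.Icc 1 (T + 1), (yu k - yu (k - 1)) ^ 2) ≤ r₂ := by
  intro u hu
  obtain rfl : J = saddleFunctional T F := funext fun u => funext fun x => funext (hJ u x)
  have h0 : (0 : ℕ → ℝ) ∈ S := hS ▸ ⟨rfl, fun _ _ => rfl⟩
  obtain ⟨α₁, β₁, γ₁, hα₁, hF₁⟩ := H2 0 h0
  obtain ⟨α₂, β₂, γ₂, hα₂, hF₂⟩ := H3 0 h0
  obtain ⟨ε₁, hε₁, C₁, hlow⟩ :=
    exists_coercive_lower_bound hc₂pos hα₁ fun k hk s => hF₁ k hk s (u k) (hu k)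
  obtain ⟨ε₂, hε₂, C₂, hhigh⟩ :=
    exists_coercive_upper_bound hc₂pos hα₂ fun k hk t => hF₂ k hk t (u k) (hu k)
  refine ⟨√((C₂ - C₁) / ε₁) + 1, by positivity, √((C₂ - C₁) / ε₂) + 1, by positivity,
    fun xu hxu yu hyu hsaddle => ?_⟩
  have hchain : ε₁ * discreteEnergy T xu + C₁ ≤ -(ε₂ * discreteEnergy T yu) + C₂ :=
    calc _ ≤ saddleFunctional T F u xu 0 := hlow xu (hc₂ xu hxu)
      _ ≤ saddleFunctional T F u 0 yu :=
        (hsaddle 0 h0 0 h0).1.trans (hsaddle 0 h0 0 h0).2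
      _ ≤ _ := hhigh yu (hc₂ yu hyu)
  have hEx := mul_nonneg hε₁.le (discreteEnergy_nonneg T xu)
  have hEy := mul_nonneg hε₂.le (discreteEnergy_nonneg T yu)
  change √(discreteEnergy T xu) ≤ _ ∧ √(discreteEnergy T yu) ≤ _
  constructor
  · refine (Real.sqrt_le_sqrt ((le_div_iff₀' hε₁).2 ?_)).trans (le_add_of_nonneg_right zero_le_one)
    linarith
  · refine (Real.sqrt_le_sqrt ((le_div_iff₀' hε₂).2 ?_)).trans (le_add_of_nonneg_right zero_le_one)
    linarith

/-- Under H1–H5 all saddle points of `J_u` lie in a fixed product of balls `B₁ × B₂`: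
there are radii `r₁, r₂ > 0` bounding the norms of every saddle point. -/
theorem stmt_15 (T : ℕ) (hT : 1 ≤ T) (D : ℝ) (hD : 0 < D)
    (S : Set (ℕ → ℝ))
    (hS : S = {x : ℕ → ℝ | x 0 = 0 ∧ ∀ k, T + 1 ≤ k → x k = 0})
    (c₂ : ℝ) (hc₂pos : 0 < c₂)
    (hc₂ : ∀ x ∈ S, ∑ k ∈ Finset.Icc 1 T, (x k) ^ 2 ≤
      c₂ * ∑ k ∈ Finset.Icc 1 (T + 1), (x k - x (k - 1)) ^ 2)
    (F : ℕ → ℝ → ℝ → ℝ → ℝ)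
    -- H1 (continuity of F in all variables):
    (hF : ∀ k, Continuous (fun p : ℝ × ℝ × ℝ => F k p.1 p.2.1 p.2.2))
    (J : (ℕ → ℝ) → (ℕ → ℝ) → (ℕ → ℝ) → ℝ)
    (hJ : ∀ u x y, J u x y =
      (∑ k ∈ Finset.Icc 1 (T + 1),
        ((x k - x (k - 1)) ^ 2 / 2 - (y k - y (k - 1)) ^ 2 / 2)) +
      ∑ k ∈ Finset.Icc 1 T, F k (x k) (y k) (u k))
    -- H2:
    (H2 : ∀ y ∈ S, ∃ α₁ β₁ : ℝ, ∃ γ₁ : ℕ → ℝ, α₁ < 1 / (2 * c₂) ∧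
      ∀ k ∈ Finset.Icc 1 T, ∀ s u : ℝ, |u| ≤ D →
        -α₁ * s ^ 2 + β₁ * s + γ₁ k ≤ F k s (y k) u)
    -- H3:
    (H3 : ∀ x ∈ S, ∃ α₂ β₂ : ℝ, ∃ γ₂ : ℕ → ℝ, α₂ < 1 / (2 * c₂) ∧
      ∀ k ∈ Finset.Icc 1 T, ∀ t u : ℝ, |u| ≤ D →
        F k (x k) t u ≤ α₂ * t ^ 2 + β₂ * t + γ₂ k)
    -- H4:
    (H4 : ∀ u : ℕ → ℝ, (∀ k, |u k| ≤ D) → ∀ y ∈ S, ConvexOn ℝ S (fun x => J u x y))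
    -- H5:
    (H5 : ∀ u : ℕ → ℝ, (∀ k, |u k| ≤ D) → ∀ x ∈ S, ConcaveOn ℝ S (fun y => J u x y)) :
    ∀ u : ℕ → ℝ, (∀ k, |u k| ≤ D) →
      ∃ r₁ > (0 : ℝ), ∃ r₂ > (0 : ℝ), ∀ xu ∈ S, ∀ yu ∈ S,
        (∀ x ∈ S, ∀ y ∈ S, J u xu y ≤ J u xu yu ∧ J u xu yu ≤ J u x yu) →
          Real.sqrt (∑ k ∈ Finset.Icc 1 (T + 1), (xu k - xu (k - 1)) ^ 2) ≤ r₁ ∧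
          Real.sqrt (∑ k ∈ Finset.Icc 1 (T + 1), (yu k - yu (k - 1)) ^ 2) ≤ r₂ :=
  stmt_15_general T D S hS c₂ hc₂pos hc₂ F J hJ H2 H3
end
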